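/- arXiv:2308.01609 — 4 statements merged into one kernel-verified Lean document; each statement's English description precedes it below -/
import Mathlib

section
/- Let c ≥ 1 and m ≥ 1 be integers, let Δ ∈ [0,1], and let Y = (Y_1, …, Y_m) be a random vector taking values in (Fin c)^m on some probability space. Let B_1, …, B_m be Bernoulli(Δ) random variables and U_1, …, U_m be uniformly distributed on Fin c, with (B_1, …, B_m, U_1, …, U_m) mutually independent and independent of Y. Define Ỹ = (Ỹ_1, …, Ỹ_m) by Ỹ_i = U_i if B_i = 1 and Ỹ_i = Y_i if B_i = 0. Then H(Y) ≤ H(Ỹ), i.e., adding symmetric label noise does not decrease the Shannon entropy of the label vector. -/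
open MeasureTheory Real

/-- `P(X = x)` for a random variable `X` on `(Ω, μ)`. -/
noncomputable def probOf {Ω : Type*} [MeasurableSpace Ω] (μ : Measure Ω)
    {α : Type*} (X : Ω → α) (x : α) : ℝ :=
  (μ (X ⁻¹' {x})).toReal

/-- Shannon entropy (in nats) of a finitely-valued random variable. -/
noncomputable def entropy {Ω : Type*} [MeasurableSpace Ω] (μ : Measure Ω)
    {α : Type*} [Fintype α] (X : Ω → α) : ℝ :=
  ∑ x, Real.negMulLog (probOf μ X x)

/-- Conditional probability `P(Y = y | X = x)`. -/
noncomputable def condProb {Ω : Type*} [MeasurableSpace Ω] (μ : Measure Ω)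
    {α β : Type*} (X : Ω → α) (Y : Ω → β) (x : α) (y : β) : ℝ :=
  probOf μ (fun ω => (X ω, Y ω)) (x, y) / probOf μ X x

/-- Conditional entropy `H(Y | X) = ∑ₓ P(X = x) · H(Y | X = x)`. -/
noncomputable def condEntropy {Ω : Type*} [MeasurableSpace Ω] (μ : Measure Ω)
    {α β : Type*} [Fintype α] [Fintype β] (X : Ω → α) (Y : Ω → β) : ℝ :=
  ∑ x, probOf μ X x * ∑ y, Real.negMulLog (condProb μ X Y x y)

/-- Markov chain `X → Y → Z`: `X` and `Z` are conditionally independent given `Y`. -/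
def MarkovChain {Ω : Type*} [MeasurableSpace Ω] (μ : Measure Ω)
    {α β γ : Type*} (X : Ω → α) (Y : Ω → β) (Z : Ω → γ) : Prop :=
  ∀ x y z,
    probOf μ (fun ω => ((X ω, Y ω), Z ω)) ((x, y), z) * probOf μ Y y =
      probOf μ (fun ω => (X ω, Y ω)) (x, y) * probOf μ (fun ω => (Y ω, Z ω)) (y, z)


/-- The type family indexing the noise variables: `m` Bernoulli flips, `m` uniform
labels, and the label vector itself. -/
def noiseFam (c m : ℕ) : (Fin m ⊕ Fin m) ⊕ Unit → Type :=
  fun j => match j with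
  | .inl (.inl _) => Bool
  | .inl (.inr _) => Fin c
  | .inr _ => Fin m → Fin c

/-- The canonical measurable-space structure on each member of the family. -/
def noiseMS (c m : ℕ) : ∀ j, MeasurableSpace (noiseFam c m j) :=
  fun j => match j with
  | .inl (.inl _) => (inferInstance : MeasurableSpace Bool)
  | .inl (.inr _) => (inferInstance : MeasurableSpace (Fin c))
  | .inr _ => (inferInstance : MeasurableSpace (Fin m → Fin c))

/-- The family of random variables `(B₁, …, Bₘ, U₁, …, Uₘ, Y)`. -/
def noiseFun {Ω : Type*} {c m : ℕ} (Y : Ω → (Fin m → Fin c))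
    (B : Fin m → Ω → Bool) (U : Fin m → Ω → Fin c) :
    ∀ j, Ω → noiseFam c m j :=
  fun j => match j with
  | .inl (.inl i) => B i
  | .inl (.inr i) => U i
  | .inr _ => Y

section aux
variable {Ω : Type*} [MeasurableSpace Ω] (μ : Measure Ω) [IsProbabilityMeasure μ]

/-- kernel entry -/
noncomputable def kern (c : ℕ) (Δ : ℝ) (a b : Fin c) : ℝ :=
  Δ / c + (if a = b then 1 - Δ else 0)

lemma kern_nonneg {c : ℕ} {Δ : ℝ} (hΔ0 : 0 ≤ Δ) (hΔ1 : Δ ≤ 1) (a b : Fin c) :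
    0 ≤ kern c Δ a b := by
  unfold kern
  have : (0:ℝ) ≤ Δ / c := by positivity
  split <;> nlinarith

lemma kern_sum (c : ℕ) (hc : 1 ≤ c) (Δ : ℝ) (a : Fin c) :
    ∑ b : Fin c, kern c Δ a b = 1 := by
  unfold kern
  rw [Finset.sum_add_distrib, Finset.sum_const, Finset.sum_ite_eq]
  simp only [Finset.mem_univ, if_true, Finset.card_univ, Fintype.card_fin, nsmul_eq_mul]
  have hc0 : (c : ℝ) ≠ 0 := by positivity
  field_simp
  ring

lemma kern_sum' (c : ℕ) (hc : 1 ≤ c) (Δ : ℝ) (b : Fin c) :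
    ∑ a : Fin c, kern c Δ a b = 1 := by
  have h : ∀ a, kern c Δ a b = kern c Δ b a := by
    intro a; unfold kern; by_cases h : a = b
    · simp [h]
    · rw [if_neg h, if_neg (fun hh => h hh.symm)]
  simp_rw [h]; exact kern_sum c hc Δ b


/-- The per-index singleton events describing a full configuration of `(B, U, Y)`. -/
def cellSets {c m : ℕ} (s : (Fin m → Bool) × (Fin m → Fin c) × (Fin m → Fin c)) :
    ∀ j, Set (noiseFam c m j) :=
  fun j => match j with
  | .inl (.inl i) => {s.1 i}
  | .inl (.inr i) => {s.2.1 i}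
  | .inr _ => {s.2.2}

def cellΩ {Ω : Type*} {c m : ℕ} (Y : Ω → (Fin m → Fin c))
    (B : Fin m → Ω → Bool) (U : Fin m → Ω → Fin c)
    (s : (Fin m → Bool) × (Fin m → Fin c) × (Fin m → Fin c)) : Set Ω :=
  ⋂ j, (noiseFun Y B U j) ⁻¹' (cellSets s j)

lemma mem_cellΩ {Ω : Type*} {c m : ℕ} (Y : Ω → (Fin m → Fin c))
    (B : Fin m → Ω → Bool) (U : Fin m → Ω → Fin c)
    (s : (Fin m → Bool) × (Fin m → Fin c) × (Fin m → Fin c)) (ω : Ω) :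
    ω ∈ cellΩ Y B U s ↔
      (∀ i, B i ω = s.1 i) ∧ (∀ i, U i ω = s.2.1 i) ∧ Y ω = s.2.2 := by
  simp only [cellΩ, Set.mem_iInter, Set.mem_preimage, Sum.forall]
  constructor
  · rintro ⟨⟨h1, h2⟩, h3⟩
    exact ⟨fun i => h1 i, fun i => h2 i, h3 ()⟩
  · rintro ⟨h1, h2, h3⟩
    exact ⟨⟨fun i => h1 i, fun i => h2 i⟩, fun _ => h3⟩

lemma coord_sum (c : ℕ) (hc : 1 ≤ c) (Δ : ℝ) (a b : Fin c) :
    ∑ β : Bool, ∑ υ : Fin c,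
      (if (if β then υ else b) = a then (if β then Δ else 1 - Δ) * (1 / (c : ℝ)) else 0)
      = kern c Δ a b := by
  have hc0 : (c : ℝ) ≠ 0 := by positivity
  rw [Fintype.sum_bool]
  simp only [reduceIte, Bool.false_eq_true, if_false, if_true]
  have h1 : ∑ υ : Fin c, (if υ = a then Δ * (1 / (c : ℝ)) else 0) = Δ * (1 / c) := by simp
  have h2 : ∑ _υ : Fin c, (if b = a then (1 - Δ) * (1 / (c : ℝ)) else 0)
      = if b = a then (1 - Δ) else 0 := by
    rw [Finset.sum_const, Finset.card_univ, Fintype.card_fin, nsmul_eq_mul]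
    by_cases h : b = a
    · rw [if_pos h, if_pos h]; field_simp
    · simp [h]
  rw [h1, h2]
  unfold kern
  by_cases h : b = a
  · rw [if_pos h, if_pos h.symm]; field_simp
  · rw [if_neg h, if_neg (fun hh => h hh.symm)]; field_simp

end aux

/-- Adding symmetric label noise (each label independently replaced, with probability
`Δ`, by a uniformly random label) does not decrease the Shannon entropy of the label
vector: `H(Y) ≤ H(Ỹ)`. -/
theorem entropy_le_entropy_symmetricNoise
    {Ω : Type*} [MeasurableSpace Ω] (μ : Measure Ω) [IsProbabilityMeasure μ]
    (c m : ℕ) (hc : 1 ≤ c) (hm : 1 ≤ m) (Δ : ℝ) (hΔ0 : 0 ≤ Δ) (hΔ1 : Δ ≤ 1)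
    (Y : Ω → (Fin m → Fin c)) (B : Fin m → Ω → Bool) (U : Fin m → Ω → Fin c)
    (hY : Measurable Y) (hB : ∀ i, Measurable (B i)) (hU : ∀ i, Measurable (U i))
    (hBernoulli : ∀ i, probOf μ (B i) true = Δ)
    (hUniform : ∀ i u, probOf μ (U i) u = 1 / c)
    (hIndep : ProbabilityTheory.iIndepFun (m := noiseMS c m) (noiseFun Y B U) μ) :
    entropy μ Y ≤ entropy μ (fun ω i => if B i ω then U i ω else Y ω i) := by
  classical
  set Yt : Ω → (Fin m → Fin c) := fun ω i => if B i ω then U i ω else Y ω i with hYt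
  set p : (Fin m → Fin c) → ℝ := probOf μ Y with hp
  set K : (Fin m → Fin c) → (Fin m → Fin c) → ℝ :=
    fun t y => ∏ i, kern c Δ (t i) (y i) with hK
  have hp0 : ∀ y, 0 ≤ p y := fun y => ENNReal.toReal_nonneg
  have hK0 : ∀ t y, 0 ≤ K t y := fun t y =>
    Finset.prod_nonneg fun i _ => kern_nonneg hΔ0 hΔ1 _ _
  have hKrow : ∀ t, ∑ y, K t y = 1 := by
    intro t
    rw [hK]
    rw [← Fintype.piFinset_univ, ← Finset.prod_univ_sum]
    exact Finset.prod_eq_one fun i _ => kern_sum c hc Δ (t i)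
  have hKcol : ∀ y, ∑ t, K t y = 1 := by
    intro y
    show ∑ t : Fin m → Fin c, ∏ i, kern c Δ (t i) (y i) = 1
    rw [← Fintype.piFinset_univ,
      ← Finset.prod_univ_sum (fun _ => Finset.univ) (fun i v => kern c Δ v (y i))]
    exact Finset.prod_eq_one fun i _ => kern_sum' c hc Δ (y i)
  have hkey : ∀ t, probOf μ Yt t = ∑ y, K t y * p y := by
    intro t
    set T := (Fin m → Bool) × (Fin m → Fin c) × (Fin m → Fin c) with hT
    set φ : T → (Fin m → Fin c) := fun s i => if s.1 i then s.2.1 i else s.2.2 i with hφ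
    -- measurability of the events
    have hmeasE : ∀ s : T, ∀ j,
        MeasurableSet[noiseMS c m j] (cellSets (c := c) (m := m) s j) := by
      intro s j
      rcases j with (i | i) | u
      · exact @measurableSet_singleton Bool _ _ (s.1 i)
      · exact @measurableSet_singleton (Fin c) _ _ (s.2.1 i)
      · exact @measurableSet_singleton (Fin m → Fin c) _ _ s.2.2
    have hmeasCell : ∀ s : T, MeasurableSet (cellΩ Y B U s) := by
      intro s
      refine MeasurableSet.iInter fun j => ?_
      rcases j with (i | i) | u
      · exact (hB i) (measurableSet_singleton _)
      · exact (hU i) (measurableSet_singleton _)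
      · exact hY (measurableSet_singleton _)
    -- the preimage decomposes as a disjoint union of cells
    have hset : Yt ⁻¹' {t} = ⋃ s ∈ Finset.univ.filter (fun s : T => φ s = t), cellΩ Y B U s := by
      ext ω
      simp only [Set.mem_preimage, Set.mem_singleton_iff, Set.mem_iUnion, Finset.mem_filter,
        Finset.mem_univ, true_and]
      constructor
      · intro h
        refine ⟨(fun i => B i ω, fun i => U i ω, Y ω), ?_, ?_⟩
        · funext i; exact congrFun h i
        · rw [mem_cellΩ]; exact ⟨fun _ => rfl, fun _ => rfl, rfl⟩
      · rintro ⟨s, hst, hcell⟩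
        rw [mem_cellΩ] at hcell
        obtain ⟨h1, h2, h3⟩ := hcell
        funext i
        have := congrFun hst i
        simp only [hφ] at this
        rw [← this]
        show (if B i ω then U i ω else Y ω i) = _
        rw [h1 i, h2 i, h3]
    have hdisj : (Finset.univ.filter (fun s : T => φ s = t) : Set T).PairwiseDisjoint
        (cellΩ Y B U) := by
      intro s _ s' _ hne
      rw [Function.onFun, Set.disjoint_left]
      intro ω hω hω'
      rw [mem_cellΩ] at hω hω'
      exact hne (by
        obtain ⟨a1, a2, a3⟩ := hω
        obtain ⟨b1, b2, b3⟩ := hω'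
        refine Prod.ext ?_ (Prod.ext ?_ ?_)
        · funext i; rw [← a1 i, b1 i]
        · funext i; rw [← a2 i, b2 i]
        · rw [← a3, b3])
    -- probability of a cell via independence
    have hcellμ : ∀ s : T, μ (cellΩ Y B U s) =
        (∏ i, μ ((B i) ⁻¹' {s.1 i})) * ((∏ i, μ ((U i) ⁻¹' {s.2.1 i})) * μ (Y ⁻¹' {s.2.2})) := by
      intro s
      have := hIndep.meas_iInter (s := fun j => (noiseFun Y B U j) ⁻¹' (cellSets s j))
        (fun j => ⟨cellSets s j, hmeasE s j, rfl⟩)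
      rw [cellΩ, this, Fintype.prod_sum_type, Fintype.prod_sum_type]
      simp [noiseFun, cellSets, mul_assoc]
      rfl
    -- Bernoulli probabilities
    have hpB : ∀ i (b : Bool), probOf μ (B i) b = if b then Δ else 1 - Δ := by
      intro i b
      cases b
      · have hcompl : (B i) ⁻¹' {false} = ((B i) ⁻¹' {true})ᶜ := by
          ext ω; simp
        rw [probOf, hcompl, measure_compl ((hB i) (measurableSet_singleton _))
          (measure_ne_top μ _), measure_univ,
          ENNReal.toReal_sub_of_le prob_le_one ENNReal.one_ne_top, ENNReal.toReal_one]
        have := hBernoulli i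
        rw [probOf] at this
        rw [this]
        simp
      · simpa using hBernoulli i
    -- value of each cell probability in ℝ
    have hval : ∀ s : T, (μ (cellΩ Y B U s)).toReal =
        (∏ i, (if s.1 i then Δ else 1 - Δ) * (1 / (c : ℝ))) * p s.2.2 := by
      intro s
      rw [hcellμ s, ENNReal.toReal_mul, ENNReal.toReal_mul, ENNReal.toReal_prod,
        ENNReal.toReal_prod]
      have e1 : ∀ i, (μ ((B i) ⁻¹' {s.1 i})).toReal = (if s.1 i then Δ else 1 - Δ) := fun i =>
        hpB i (s.1 i)
      have e2 : ∀ i, (μ ((U i) ⁻¹' {s.2.1 i})).toReal = 1 / (c : ℝ) := fun i => hUniform i _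
      simp_rw [e1, e2]
      rw [← mul_assoc, ← Finset.prod_mul_distrib]
      rfl
    -- put it together
    rw [probOf, hset, measure_biUnion_finset hdisj (fun s _ => hmeasCell s),
      ENNReal.toReal_sum (fun s _ => measure_ne_top μ _), Finset.sum_filter]
    simp_rw [hval]
    -- now a purely combinatorial identity
    have step : ∀ y : Fin m → Fin c, ∀ b : Fin m → Bool,
        ∑ u : Fin m → Fin c,
          (if φ (b, u, y) = t then ∏ i, (if b i then Δ else 1 - Δ) * (1 / (c : ℝ)) else 0)
        = ∏ i, ∑ υ : Fin c,
            (if (if b i then υ else y i) = t i then (if b i then Δ else 1 - Δ) * (1 / (c : ℝ)) else 0) := by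
      intro y b
      have e : ∀ u : Fin m → Fin c,
          (if φ (b, u, y) = t then ∏ i, (if b i then Δ else 1 - Δ) * (1 / (c : ℝ)) else 0)
          = ∏ i, (if (if b i then u i else y i) = t i then (if b i then Δ else 1 - Δ) * (1 / (c : ℝ)) else 0) := by
        intro u
        rw [Fintype.prod_ite_zero]
        congr 1
        simp only [hφ, funext_iff]
      simp_rw [e]
      rw [← Fintype.piFinset_univ, ← Finset.prod_univ_sum (fun _ => Finset.univ)
        (fun i υ => if (if b i then υ else y i) = t i then (if b i then Δ else 1 - Δ) * (1 / (c : ℝ)) else 0)]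
    have step2 : ∀ y : Fin m → Fin c,
        ∑ b : Fin m → Bool, ∏ i, ∑ υ : Fin c,
            (if (if b i then υ else y i) = t i then (if b i then Δ else 1 - Δ) * (1 / (c : ℝ)) else 0)
        = K t y := by
      intro y
      have hswap : (∏ i : Fin m, ∑ β : Bool, ∑ υ : Fin c,
            (if (if β then υ else y i) = t i then (if β then Δ else 1 - Δ) * (1 / (c : ℝ)) else 0))
          = ∑ b ∈ Fintype.piFinset (fun _ : Fin m => (Finset.univ : Finset Bool)), ∏ i, ∑ υ : Fin c,
            (if (if b i then υ else y i) = t i then (if b i then Δ else 1 - Δ) * (1 / (c : ℝ)) else 0) :=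
        Finset.prod_univ_sum _ _
      rw [Fintype.piFinset_univ] at hswap
      rw [← hswap]
      exact Finset.prod_congr rfl fun i _ => coord_sum c hc Δ (t i) (y i)
    calc ∑ s : T, (if φ s = t then (∏ i, (if s.1 i then Δ else 1 - Δ) * (1 / (c : ℝ))) * p s.2.2 else 0)
        = ∑ s : T, (if φ s = t then ∏ i, (if s.1 i then Δ else 1 - Δ) * (1 / (c : ℝ)) else 0) * p s.2.2 := by
          refine Finset.sum_congr rfl fun s _ => ?_
          split <;> simp
      _ = ∑ b : Fin m → Bool, ∑ u : Fin m → Fin c, ∑ y : Fin m → Fin c,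
            (if φ (b, u, y) = t then ∏ i, (if b i then Δ else 1 - Δ) * (1 / (c : ℝ)) else 0) * p y := by
          rw [Fintype.sum_prod_type]
          exact Finset.sum_congr rfl fun b _ => by rw [Fintype.sum_prod_type]
      _ = ∑ y : Fin m → Fin c, (∑ b : Fin m → Bool, ∑ u : Fin m → Fin c,
            (if φ (b, u, y) = t then ∏ i, (if b i then Δ else 1 - Δ) * (1 / (c : ℝ)) else 0)) * p y := by
          have comm3 : ∀ f : (Fin m → Bool) → (Fin m → Fin c) → (Fin m → Fin c) → ℝ,
              (∑ b, ∑ u, ∑ y, f b u y) = ∑ y, ∑ b, ∑ u, f b u y := by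
            intro f
            calc (∑ b, ∑ u, ∑ y, f b u y) = ∑ b, ∑ y, ∑ u, f b u y :=
                  Finset.sum_congr rfl fun b _ => Finset.sum_comm
              _ = ∑ y, ∑ b, ∑ u, f b u y := Finset.sum_comm
          rw [comm3]
          refine Finset.sum_congr rfl fun y _ => ?_
          rw [Finset.sum_mul]
          refine Finset.sum_congr rfl fun b _ => ?_
          rw [Finset.sum_mul]
      _ = ∑ y, K t y * p y := by
          refine Finset.sum_congr rfl fun y _ => ?_
          congr 1
          rw [← step2 y]
          exact Finset.sum_congr rfl fun b _ => step y b
  -- Jensen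
  have hJ : ∀ t, ∑ y, K t y * Real.negMulLog (p y) ≤ Real.negMulLog (probOf μ Yt t) := by
    intro t
    rw [hkey t]
    have := Real.concaveOn_negMulLog.le_map_sum
      (t := Finset.univ) (w := fun y => K t y) (p := fun y => p y)
      (fun y _ => hK0 t y) (hKrow t) (fun y _ => hp0 y)
    simpa [smul_eq_mul] using this
  calc entropy μ Y = ∑ y, Real.negMulLog (p y) := rfl
    _ = ∑ y, (∑ t, K t y) * Real.negMulLog (p y) := by
        simp_rw [hKcol]; simp
    _ = ∑ t, ∑ y, K t y * Real.negMulLog (p y) := by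
        rw [Finset.sum_comm]; simp_rw [Finset.sum_mul]
    _ ≤ ∑ t, Real.negMulLog (probOf μ Yt t) := Finset.sum_le_sum fun t _ => hJ t
    _ = entropy μ Yt := rfl
end

section
/- Let W, X, Y be random variables on a common probability space taking values in finite sets 𝒲, 𝒳, 𝒴 respectively, and let q : 𝒳 × 𝒲 → (𝒴 → ℝ) assign to each (x, w) a strictly positive probability vector q(·|x,w) on 𝒴. Define the expected conditional cross-entropy H_{p,q}(Y|X,W) = −E[ln q(Y|X,W)] and, for each (x,w) with P(X = x, W = w) > 0, let p(·|x,w) denote the conditional distribution of Y given X = x, W = w. Then H_{p,q}(Y|X,W) = H(Y) − I(Y;X|W) − I(Y;W|X) − I(W;X) + I(W;X|Y) + E_{X,W}[ D(p(·|X,W) ‖ q(·|X,W)) ]. -/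
open MeasureTheory Real

/-- Mutual information `I(X;Y) = H(X) + H(Y) − H(X,Y)`. -/
noncomputable def mutualInfo {Ω : Type*} [MeasurableSpace Ω] (μ : Measure Ω)
    {α β : Type*} [Fintype α] [Fintype β] (X : Ω → α) (Y : Ω → β) : ℝ :=
  entropy μ X + entropy μ Y - entropy μ (fun ω => (X ω, Y ω))

/-- Conditional mutual information `I(X;Y|Z) = H(X|Z) − H(X|Y,Z)`. -/
noncomputable def condMutualInfo {Ω : Type*} [MeasurableSpace Ω] (μ : Measure Ω)
    {α β γ : Type*} [Fintype α] [Fintype β] [Fintype γ]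
    (X : Ω → α) (Y : Ω → β) (Z : Ω → γ) : ℝ :=
  condEntropy μ Z X - condEntropy μ (fun ω => (Y ω, Z ω)) X

/-- Kullback–Leibler divergence between probability vectors on a finite type
(terms with `p y = 0` contribute `0`). -/
noncomputable def fKLDiv {𝒴 : Type*} [Fintype 𝒴] (p q : 𝒴 → ℝ) : ℝ :=
  ∑ y, p y * Real.log (p y / q y)

section Helpers
variable {Ω : Type*} [MeasurableSpace Ω] (μ : Measure Ω)

lemma probOf_nonneg {α : Type*} (A : Ω → α) (a : α) : 0 ≤ probOf μ A a :=
  ENNReal.toReal_nonneg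

omit [MeasurableSpace Ω] in
lemma pair_preimage {α β : Type*} (A : Ω → α) (B : Ω → β) (a : α) (b : β) :
    (fun ω => (A ω, B ω)) ⁻¹' {(a, b)} = A ⁻¹' {a} ∩ B ⁻¹' {b} := by
  ext ω; simp [Prod.ext_iff]

lemma probOf_marg [IsFiniteMeasure μ] {α β : Type*} [Fintype β]
    [MeasurableSpace α] [MeasurableSingletonClass α]
    [MeasurableSpace β] [MeasurableSingletonClass β]
    (A : Ω → α) (B : Ω → β) (hA : Measurable A) (hB : Measurable B) (a : α) :
    probOf μ A a = ∑ b, probOf μ (fun ω => (A ω, B ω)) (a, b) := by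
  have hset : A ⁻¹' {a} = ⋃ b ∈ Finset.univ, (A ⁻¹' {a} ∩ B ⁻¹' {b}) := by
    ext ω; simp
  have hmeas : ∀ b : β, MeasurableSet (A ⁻¹' {a} ∩ B ⁻¹' {b}) := fun b =>
    (hA (measurableSet_singleton a)).inter (hB (measurableSet_singleton b))
  have hdisj : Set.PairwiseDisjoint (Finset.univ : Finset β)
      (fun b => A ⁻¹' {a} ∩ B ⁻¹' {b}) := by
    intro i _ j _ hij
    refine Set.disjoint_left.2 fun ω hωi hωj => hij ?_
    have h1 : B ω = i := hωi.2
    have h2 : B ω = j := hωj.2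
    rw [← h1, h2]
  have key : μ (A ⁻¹' {a}) = ∑ b, μ (A ⁻¹' {a} ∩ B ⁻¹' {b}) := by
    conv_lhs => rw [hset]
    exact measure_biUnion_finset hdisj fun b _ => hmeas b
  unfold probOf
  simp_rw [pair_preimage]
  rw [key, ENNReal.toReal_sum fun b _ => measure_ne_top μ _]

lemma entropy_comp_equiv {α β : Type*} [Fintype α] [Fintype β] (e : α ≃ β) (A : Ω → α) :
    entropy μ (fun ω => e (A ω)) = entropy μ A := by
  unfold entropy
  refine (Fintype.sum_equiv e (fun a => Real.negMulLog (probOf μ A a))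
    (fun b => Real.negMulLog (probOf μ (fun ω => e (A ω)) b)) fun a => ?_).symm
  have hs : (fun ω => e (A ω)) ⁻¹' {e a} = A ⁻¹' {a} := by
    ext ω; simp [e.injective.eq_iff]
  show Real.negMulLog (probOf μ A a) = Real.negMulLog (probOf μ (fun ω => e (A ω)) (e a))
  unfold probOf
  rw [hs]

lemma integral_comp_fintype [IsProbabilityMeasure μ] {α : Type*} [Fintype α]
    [MeasurableSpace α] [MeasurableSingletonClass α]
    (T : Ω → α) (hT : Measurable T) (g : α → ℝ) :
    ∫ ω, g (T ω) ∂μ = ∑ a, probOf μ T a * g a := by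
  have h1 : ∫ ω, g (T ω) ∂μ = ∫ a, g a ∂(μ.map T) :=
    (integral_map hT.aemeasurable (measurable_of_countable g).aestronglyMeasurable).symm
  have : IsProbabilityMeasure (μ.map T) := Measure.isProbabilityMeasure_map hT.aemeasurable
  rw [h1, integral_fintype .of_finite]
  refine Finset.sum_congr rfl fun a _ => ?_
  rw [measureReal_def, Measure.map_apply hT (measurableSet_singleton a)]
  simp [probOf, mul_comm]

end Helpers

lemma chain_sum {β : Type*} [Fintype β] (A : β → ℝ) (hA : ∀ b, 0 ≤ A b) :
    (∑ b, A b) * (∑ b, negMulLog (A b / ∑ b, A b)) =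
      (∑ b, negMulLog (A b)) - negMulLog (∑ b, A b) := by
  set m := ∑ b, A b with hm
  rcases eq_or_lt_of_le (Finset.sum_nonneg fun b _ => hA b) with h0 | hpos
  · have hz : ∀ b, A b = 0 := by
      intro b
      have := (Finset.sum_eq_zero_iff_of_nonneg (fun b _ => hA b)).1 h0.symm
      exact this b (Finset.mem_univ b)
    have hm0 : m = 0 := by rw [hm, ← h0]
    simp [hz, hm0, Real.negMulLog_zero]
  · have per : ∀ b, m * negMulLog (A b / m) = negMulLog (A b) + A b * Real.log m := by
      intro b
      rcases eq_or_lt_of_le (hA b) with hb | hb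
      · simp [← hb, negMulLog]
      · rw [negMulLog, negMulLog, Real.log_div hb.ne' hpos.ne']
        have hm0 : m ≠ 0 := hpos.ne'
        rw [← hm]
        field_simp
        ring
    rw [Finset.mul_sum]
    simp_rw [per]
    rw [Finset.sum_add_distrib, ← Finset.sum_mul, ← hm, negMulLog]
    ring

lemma fiber_cross {β : Type*} [Fintype β] (A q : β → ℝ) (hA : ∀ b, 0 ≤ A b)
    (hq : ∀ b, 0 < q b) :
    (∑ b, A b) * (∑ b, negMulLog (A b / ∑ b, A b)) +
      (∑ b, A b) * (∑ b, (A b / ∑ b, A b) * Real.log ((A b / ∑ b, A b) / q b)) =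
      - ∑ b, A b * Real.log (q b) := by
  set m := ∑ b, A b with hm
  rcases eq_or_lt_of_le (Finset.sum_nonneg fun b _ => hA b) with h0 | hpos
  · have hz : ∀ b, A b = 0 := by
      intro b
      have := (Finset.sum_eq_zero_iff_of_nonneg (fun b _ => hA b)).1 h0.symm
      exact this b (Finset.mem_univ b)
    have hm0 : m = 0 := by rw [hm, ← h0]
    simp [hz, hm0, Real.negMulLog_zero]
  · have per : ∀ b, m * negMulLog (A b / m) + m * ((A b / m) * Real.log ((A b / m) / q b)) =
        - (A b * Real.log (q b)) := by
      intro b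
      rcases eq_or_lt_of_le (hA b) with hb | hb
      · simp [← hb, negMulLog]
      · have hm0 : m ≠ 0 := hpos.ne'
        have h1 : m * negMulLog (A b / m) = - (A b * Real.log (A b / m)) := by
          rw [negMulLog]; field_simp
        have h2 : m * ((A b / m) * Real.log ((A b / m) / q b)) =
            A b * (Real.log (A b / m) - Real.log (q b)) := by
          rw [Real.log_div (by positivity) (hq b).ne']
          field_simp
        rw [h1, h2]; ring
    calc (∑ b, A b) * (∑ b, negMulLog (A b / ∑ b, A b)) +
        (∑ b, A b) * (∑ b, (A b / ∑ b, A b) * Real.log ((A b / ∑ b, A b) / q b))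
        = ∑ b, (m * negMulLog (A b / m) + m * ((A b / m) * Real.log ((A b / m) / q b))) := by
          rw [Finset.sum_add_distrib, ← Finset.mul_sum, ← Finset.mul_sum, ← hm]
      _ = ∑ b, - (A b * Real.log (q b)) := by simp_rw [per]
      _ = - ∑ b, A b * Real.log (q b) := by rw [Finset.sum_neg_distrib]

def prodSwapRight (α β γ : Type*) : (α × β) × γ ≃ (α × γ) × β :=
  ⟨fun p => ((p.1.1, p.2), p.1.2), fun p => ((p.1.1, p.2), p.1.2),
    fun p => rfl, fun p => rfl⟩

lemma condEntropy_chain {Ω : Type*} [MeasurableSpace Ω] (μ : Measure Ω)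
    [IsProbabilityMeasure μ] {α β : Type*} [Fintype α] [Fintype β]
    [MeasurableSpace α] [MeasurableSingletonClass α]
    [MeasurableSpace β] [MeasurableSingletonClass β]
    (A : Ω → α) (B : Ω → β) (hA : Measurable A) (hB : Measurable B) :
    condEntropy μ A B = entropy μ (fun ω => (A ω, B ω)) - entropy μ A := by
  unfold condEntropy condProb
  have marg := probOf_marg μ A B hA hB
  calc ∑ a, probOf μ A a *
        ∑ b, negMulLog (probOf μ (fun ω => (A ω, B ω)) (a, b) / probOf μ A a)
      = ∑ a, ((∑ b, probOf μ (fun ω => (A ω, B ω)) (a, b)) *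
          ∑ b, negMulLog (probOf μ (fun ω => (A ω, B ω)) (a, b) /
            ∑ b, probOf μ (fun ω => (A ω, B ω)) (a, b))) := by
        refine Finset.sum_congr rfl fun a _ => ?_
        rw [← marg a]
    _ = ∑ a, ((∑ b, negMulLog (probOf μ (fun ω => (A ω, B ω)) (a, b))) -
          negMulLog (∑ b, probOf μ (fun ω => (A ω, B ω)) (a, b))) := by
        refine Finset.sum_congr rfl fun a _ => ?_
        exact chain_sum _ (fun b => probOf_nonneg μ _ _)
    _ = entropy μ (fun ω => (A ω, B ω)) - entropy μ A := by
        rw [Finset.sum_sub_distrib]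
        congr 1
        · rw [entropy, Fintype.sum_prod_type]
        · unfold entropy
          exact Finset.sum_congr rfl fun a _ => by rw [← marg a]

/-- Lemma 2 (cross-entropy decomposition): the expected cross-entropy loss
`H_{p,q}(Y|X,W) = −E[ln q(Y|X,W)]` of a model with predictive distribution
`q(·|x,w)` decomposes as
`H(Y) − I(Y;X|W) − I(Y;W|X) − I(W;X) + I(W;X|Y) + E_{X,W}[D(p(·|X,W) ‖ q(·|X,W))]`. -/
theorem crossEntropy_decomposition
    {Ω : Type*} [MeasurableSpace Ω] (μ : Measure Ω) [IsProbabilityMeasure μ]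
    {𝒲 𝒳 𝒴 : Type*} [Fintype 𝒲] [Fintype 𝒳] [Fintype 𝒴]
    [MeasurableSpace 𝒲] [MeasurableSingletonClass 𝒲]
    [MeasurableSpace 𝒳] [MeasurableSingletonClass 𝒳]
    [MeasurableSpace 𝒴] [MeasurableSingletonClass 𝒴]
    (W : Ω → 𝒲) (X : Ω → 𝒳) (Y : Ω → 𝒴)
    (hW : Measurable W) (hX : Measurable X) (hY : Measurable Y)
    (q : 𝒳 × 𝒲 → 𝒴 → ℝ)
    (hqpos : ∀ xw y, 0 < q xw y) (hqsum : ∀ xw, ∑ y, q xw y = 1) :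
    (- ∫ ω, Real.log (q (X ω, W ω) (Y ω)) ∂μ) =
      entropy μ Y - condMutualInfo μ Y X W - condMutualInfo μ Y W X
        - mutualInfo μ W X + condMutualInfo μ W X Y
        + ∑ x, ∑ w, probOf μ (fun ω => (X ω, W ω)) (x, w) *
            fKLDiv (fun y => condProb μ (fun ω => (X ω, W ω)) Y (x, w) y) (q (x, w)) := by
  have hXWm : Measurable (fun ω => (X ω, W ω)) := hX.prodMk hW
  have hWXm : Measurable (fun ω => (W ω, X ω)) := hW.prodMk hX
  have hXYm : Measurable (fun ω => (X ω, Y ω)) := hX.prodMk hY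
  -- abbreviations for entropies
  set eY := entropy μ Y with heY
  set eW := entropy μ W with heW
  set eX := entropy μ X with heX
  set eXW := entropy μ (fun ω => (X ω, W ω)) with heXW
  set eWY := entropy μ (fun ω => (W ω, Y ω)) with heWY
  set eXY := entropy μ (fun ω => (X ω, Y ω)) with heXY
  set eT := entropy μ (fun ω => ((X ω, W ω), Y ω)) with heT
  -- entropy equalities under permutations
  have hWX : entropy μ (fun ω => (W ω, X ω)) = eXW :=
    entropy_comp_equiv μ (Equiv.prodComm 𝒳 𝒲) (fun ω => (X ω, W ω))
  have hYW : entropy μ (fun ω => (Y ω, W ω)) = eWY :=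
    entropy_comp_equiv μ (Equiv.prodComm 𝒲 𝒴) (fun ω => (W ω, Y ω))
  have hWXY : entropy μ (fun ω => ((W ω, X ω), Y ω)) = eT :=
    entropy_comp_equiv μ ((Equiv.prodComm 𝒳 𝒲).prodCongr (Equiv.refl 𝒴))
      (fun ω => ((X ω, W ω), Y ω))
  have hXYW : entropy μ (fun ω => ((X ω, Y ω), W ω)) = eT :=
    entropy_comp_equiv μ (prodSwapRight 𝒳 𝒲 𝒴) (fun ω => ((X ω, W ω), Y ω))
  -- chain rules
  have c1 : condEntropy μ W Y = eWY - eW := condEntropy_chain μ W Y hW hY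
  have c2 : condEntropy μ (fun ω => (X ω, W ω)) Y = eT - eXW :=
    condEntropy_chain μ (fun ω => (X ω, W ω)) Y hXWm hY
  have c3 : condEntropy μ X Y = eXY - eX := condEntropy_chain μ X Y hX hY
  have c4 : condEntropy μ (fun ω => (W ω, X ω)) Y = eT - eXW := by
    rw [condEntropy_chain μ (fun ω => (W ω, X ω)) Y hWXm hY, hWXY, hWX]
  have c5 : condEntropy μ Y W = eWY - eY := by
    rw [condEntropy_chain μ Y W hY hW, hYW]
  have c6 : condEntropy μ (fun ω => (X ω, Y ω)) W = eT - eXY := by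
    rw [condEntropy_chain μ (fun ω => (X ω, Y ω)) W hXYm hW, hXYW]
  -- reduce information quantities
  rw [condMutualInfo, condMutualInfo, condMutualInfo, mutualInfo, c1, c2, c3, c4, c5, c6,
    hWX, ← heW, ← heX]
  -- now prove  -∫ = eT - eXW + KL,  i.e.  -∫ = condEntropy μ XW Y + KL
  have key : (- ∫ ω, Real.log (q (X ω, W ω) (Y ω)) ∂μ) =
      condEntropy μ (fun ω => (X ω, W ω)) Y +
        ∑ x, ∑ w, probOf μ (fun ω => (X ω, W ω)) (x, w) *
          fKLDiv (fun y => condProb μ (fun ω => (X ω, W ω)) Y (x, w) y) (q (x, w)) := by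
    have hTm : Measurable (fun ω => ((X ω, W ω), Y ω)) := hXWm.prodMk hY
    have hint := integral_comp_fintype μ (fun ω => ((X ω, W ω), Y ω)) hTm
      (fun t => Real.log (q t.1 t.2))
    rw [show (∫ ω, Real.log (q (X ω, W ω) (Y ω)) ∂μ) =
        ∫ ω, (fun t : (𝒳 × 𝒲) × 𝒴 => Real.log (q t.1 t.2)) (((X ω, W ω), Y ω)) ∂μ from rfl,
      hint]
    unfold condEntropy condProb fKLDiv
    rw [Fintype.sum_prod_type, Fintype.sum_prod_type, Fintype.sum_prod_type]
    rw [← Finset.sum_neg_distrib, ← Finset.sum_add_distrib]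
    refine Finset.sum_congr rfl fun x _ => ?_
    rw [← Finset.sum_neg_distrib, ← Finset.sum_add_distrib]
    refine Finset.sum_congr rfl fun w _ => ?_
    have marg := probOf_marg μ (fun ω => (X ω, W ω)) Y hXWm hY (x, w)
    rw [marg]
    exact (fiber_cross (fun y => probOf μ (fun ω => ((X ω, W ω), Y ω)) ((x, w), y))
      (q (x, w)) (fun y => probOf_nonneg μ _ _) (hqpos (x, w))).symm
  rw [key, c2]
  ring
end

section
/- Let a > 0, P > 0, and C ∈ ℝ, define f : ℝ → ℝ by f(s) = a·s + (1/2)·ln(1 + P/s) + C, and set s* = ( sqrt(P² + 2·P/a) − P ) / 2. Then s* > 0 and f attains its global minimum over (0, ∞) at s*, i.e., f(s*) ≤ f(s) for every s > 0. -/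
open Real

/-- Proposition 2 (analytic form): `f(s) = a·s + (1/2)·ln(1 + P/s) + C` attains its
global minimum over `(0, ∞)` at `s* = (√(P² + 2P/a) − P)/2`. -/
theorem noiseBound_min_at_sStar (a P C : ℝ) (ha : 0 < a) (hP : 0 < P)
    (f : ℝ → ℝ) (hf : ∀ s, f s = a * s + (1 / 2) * Real.log (1 + P / s) + C)
    (sStar : ℝ) (hsStar : sStar = (Real.sqrt (P ^ 2 + 2 * P / a) - P) / 2) :
    0 < sStar ∧ ∀ s : ℝ, 0 < s → f sStar ≤ f s := by
  have hD : (0:ℝ) ≤ P ^ 2 + 2 * P / a := by positivity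
  have hsq : P < Real.sqrt (P ^ 2 + 2 * P / a) := by
    have h1 : P ^ 2 < P ^ 2 + 2 * P / a := by
      have : 0 < 2 * P / a := by positivity
      linarith
    calc P = Real.sqrt (P ^ 2) := by rw [Real.sqrt_sq hP.le]
      _ < _ := Real.sqrt_lt_sqrt (by positivity) h1
  have ht : 0 < sStar := by rw [hsStar]; linarith
  set t := sStar with htdef
  have hsum : 2 * t + P = Real.sqrt (P ^ 2 + 2 * P / a) := by rw [hsStar]; ring
  have hsq2 : (2 * t + P) ^ 2 = P ^ 2 + 2 * P / a := by
    rw [hsum]; exact Real.sq_sqrt hD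
  have hkey : 2 * a * (t * (t + P)) = P := by
    have h2 : 4 * t ^ 2 + 4 * t * P = 2 * P / a := by nlinarith
    field_simp at h2; nlinarith
  refine ⟨ht, ?_⟩
  intro s hs
  rw [hf, hf]
  have hlog : ∀ u : ℝ, 0 < u → Real.log (1 + P / u) = Real.log (u + P) - Real.log u := by
    intro u hu
    rw [show 1 + P / u = (u + P) / u by field_simp, Real.log_div (by positivity) hu.ne']
  rw [hlog t ht, hlog s hs]
  set X := s * (t + P) / ((s + P) * t) with hXdef
  have hx : 0 < X := by positivity
  have hlb : 1 - X ≤ Real.log ((s + P) * t) - Real.log (s * (t + P)) := by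
    have h := Real.log_le_sub_one_of_pos hx
    rw [hXdef, Real.log_div (by positivity) (by positivity)] at h
    linarith
  rw [Real.log_mul (by positivity) ht.ne', Real.log_mul hs.ne' (by positivity)] at hlb
  have hXeq : X * ((s + P) * t) = s * (t + P) := by
    rw [hXdef]; field_simp
  have hmain : 0 ≤ 2 * a * (s - t) + 1 - X := by
    have hpos : 0 < (s + P) * t := by positivity
    have hident : (2 * a * (s - t) + 1 - X) * (t * (t + P) * (s + P)) = P * (s - t) ^ 2 := by
      linear_combination ((s - t) * (s + P)) * hkey - (t + P) * hXeq
    have hpos2 : 0 < t * (t + P) * (s + P) := by positivity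
    nlinarith [sq_nonneg (s - t), hident]
  linarith
end

section
/- Let a > 0, P > 0, let m be a positive integer, and let δ ∈ (0,1). Define F : ℝ → ℝ by F(s) = sqrt( ( a·s + ln( (1 + P/s)^(1/2) · (2·sqrt(m)/δ) ) ) / (2·m) ), and set s* = ( sqrt(P² + 2·P/a) − P ) / 2. Then for every s > 0, the expression inside the square root is positive and F(s*) ≤ F(s); i.e., among all Gaussian feature-noise variances s > 0, the constraint on the PAC-Bayes generalization bound in Proposition 2 is tightest at s = s*. -/
open Real

/-- Proposition 2: among all Gaussian feature-noise variances `s > 0`, the constraint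
`F(s) = √((a·s + ln((1 + P/s)^(1/2) · (2√m/δ))) / (2m))` on the sharpest PAC-Bayes
generalization bound is tightest at `s* = (√(P² + 2P/a) − P)/2`, and the expression
inside the square root is positive for every `s > 0`. -/
theorem pacBayes_bound_tightest_at_sStar (a P : ℝ) (ha : 0 < a) (hP : 0 < P)
    (m : ℕ) (hm : 0 < m) (δ : ℝ) (hδ0 : 0 < δ) (hδ1 : δ < 1)
    (F : ℝ → ℝ)
    (hF : ∀ s, F s = Real.sqrt
      ((a * s + Real.log ((1 + P / s) ^ ((1 : ℝ) / 2) * (2 * Real.sqrt m / δ))) / (2 * m)))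
    (sStar : ℝ) (hsStar : sStar = (Real.sqrt (P ^ 2 + 2 * P / a) - P) / 2) :
    ∀ s : ℝ, 0 < s →
      0 < (a * s + Real.log ((1 + P / s) ^ ((1 : ℝ) / 2) * (2 * Real.sqrt m / δ))) / (2 * m)
        ∧ F sStar ≤ F s := by
  -- basic facts about sStar
  have hq2 : Real.sqrt (P ^ 2 + 2 * P / a) ^ 2 = P ^ 2 + 2 * P / a := by
    rw [Real.sq_sqrt]; positivity
  have hqP : P < Real.sqrt (P ^ 2 + 2 * P / a) := by
    have h1 : P = Real.sqrt (P ^ 2) := by rw [Real.sqrt_sq hP.le]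
    nlinarith [hq2, Real.sqrt_nonneg (P ^ 2 + 2 * P / a),
      div_pos (by positivity : (0:ℝ) < 2 * P) ha]
  have ht0 : 0 < sStar := by rw [hsStar]; linarith
  have hkey : 2 * a * sStar * (sStar + P) = P := by
    rw [hsStar]
    have h2 : 2 * a * ((Real.sqrt (P ^ 2 + 2 * P / a) - P) / 2) *
        ((Real.sqrt (P ^ 2 + 2 * P / a) - P) / 2 + P) =
        a / 2 * (Real.sqrt (P ^ 2 + 2 * P / a) ^ 2 - P ^ 2) := by ring
    rw [h2, hq2]
    field_simp
    ring
  -- positivity of the constant log term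
  have hsm : (1 : ℝ) ≤ Real.sqrt m := by
    rw [show (1:ℝ) = Real.sqrt 1 by simp]
    exact Real.sqrt_le_sqrt (by exact_mod_cast hm)
  have hC : (1 : ℝ) < 2 * Real.sqrt m / δ := by
    rw [lt_div_iff₀ hδ0]; nlinarith
  have hC0 : (0 : ℝ) < 2 * Real.sqrt m / δ := by linarith
  -- helper: decompose log term for positive s
  have hdec : ∀ s : ℝ, 0 < s →
      Real.log ((1 + P / s) ^ ((1 : ℝ) / 2) * (2 * Real.sqrt m / δ)) =
      (1 / 2) * Real.log (1 + P / s) + Real.log (2 * Real.sqrt m / δ) := by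
    intro s hs
    have h1 : (0:ℝ) < 1 + P / s := by positivity
    rw [Real.log_mul (by positivity) (ne_of_gt hC0), Real.log_rpow h1]
  intro s hs
  have h1s : (0:ℝ) < 1 + P / s := by positivity
  have h1t : (0:ℝ) < 1 + P / sStar := by positivity
  constructor
  · apply div_pos _ (by positivity)
    rw [hdec s hs]
    have hl1 : 0 ≤ Real.log (1 + P / s) := Real.log_nonneg (by nlinarith [div_pos hP hs])
    have hl2 : 0 < Real.log (2 * Real.sqrt m / δ) := Real.log_pos hC
    nlinarith [mul_pos ha hs]
  · rw [hF, hF]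
    apply Real.sqrt_le_sqrt
    apply div_le_div_of_nonneg_right _ (by positivity)
    rw [hdec s hs, hdec sStar ht0]
    -- key inequality on logs
    have hlog : Real.log (1 + P / sStar) - Real.log (1 + P / s) ≤ 2 * a * (s - sStar) := by
      rw [← Real.log_div (ne_of_gt h1t) (ne_of_gt h1s)]
      have h2 := Real.log_le_sub_one_of_pos (div_pos h1t h1s)
      have h3 : (1 + P / sStar) / (1 + P / s) - 1 ≤ 2 * a * (s - sStar) := by
        rw [div_sub_one (ne_of_gt h1s), div_le_iff₀ h1s]
        have hexp : 2 * a * (s - sStar) * (1 + P / s) - (1 + P / sStar - (1 + P / s)) =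
            2 * a * (s - sStar) ^ 2 / s := by
          have h1 : sStar ≠ 0 := ne_of_gt ht0
          have h2 : s ≠ 0 := ne_of_gt hs
          field_simp
          linear_combination (s - sStar) * hkey
        rw [← sub_nonneg]
        calc (0:ℝ) ≤ 2 * a * (s - sStar) ^ 2 / s := by positivity
          _ = _ := hexp.symm
      linarith
    linarith
end
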